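/- arXiv:2012.15486 — 5 statements merged into one kernel-verified Lean document; each statement's English description precedes it below -/
import Mathlib

section
/- For all real numbers ν > 0, σ > 0, h, and y, the Gaussian-prior numerator integral evaluates as: ∫_{-∞}^{∞} g · (1/(2πσν)) · exp( −(y − h·sign(g))²/(2σ²) − g²/(2ν²) ) dg = ν · ( exp(−(h−y)²/(2σ²)) − exp(−(h+y)²/(2σ²)) ) / (2πσ). -/
/-!
On each open half-line `sign g` is constant, so the integrand is a constant multiple of
`g * exp (-g ^ 2 / (2 * ν ^ 2))`, whose integral is `ν ^ 2` over `(0, ∞)` and `-ν ^ 2` over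
`(-∞, 0)`; the point `g = 0` is negligible.
-/

open Real MeasureTheory Set

lemma integral_Ioi_mul_exp_neg_mul_sq {b : ℝ} (hb : 0 < b) :
    ∫ x in Ioi (0 : ℝ), x * exp (-b * x ^ 2) = (2 * b)⁻¹ := by
  have h_complex := integral_mul_cexp_neg_mul_sq (b := (b : ℂ)) (by simpa using hb)
  have h_cast := integral_complex_ofReal (f := fun x : ℝ => x * exp (-b * x ^ 2))
    (μ := volume.restrict (Ioi 0))
  push_cast at h_cast
  rw [h_complex] at h_cast
  exact_mod_cast h_cast.symm

lemma integral_Iio_mul_exp_neg_mul_sq {b : ℝ} (hb : 0 < b) :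
    ∫ x in Iio (0 : ℝ), x * exp (-b * x ^ 2) = -(2 * b)⁻¹ := by
  rw [← integral_Iic_eq_integral_Iio, ← neg_zero, ← integral_comp_neg_Ioi,
    ← integral_Ioi_mul_exp_neg_mul_sq hb, ← integral_neg]
  simp only [neg_sq, neg_mul]

lemma integral_comp_sign_mul {φ : ℝ → ℝ} {f : ℝ → ℝ} (hf : Integrable f) :
    ∫ x, φ (Real.sign x) * f x =
      φ 1 * (∫ x in Ioi 0, f x) + φ (-1) * ∫ x in Iio 0, f x := by
  have h_neg : EqOn (fun x => φ (Real.sign x) * f x) (fun x => φ (-1) * f x) (Iio 0) :=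
    fun x hx => by simp [Real.sign_of_neg (mem_Iio.mp hx)]
  have h_pos : EqOn (fun x => φ (Real.sign x) * f x) (fun x => φ 1 * f x) (Ioi 0) :=
    fun x hx => by simp [Real.sign_of_pos (mem_Ioi.mp hx)]
  have hint_neg : IntegrableOn (fun x => φ (Real.sign x) * f x) (Iio 0) :=
    ((hf.const_mul _).integrableOn).congr_fun h_neg.symm measurableSet_Iio
  have hint_pos : IntegrableOn (fun x => φ (Real.sign x) * f x) (Ici 0) :=
    (integrableOn_Ici_iff_integrableOn_Ioi).mpr
      (((hf.const_mul _).integrableOn).congr_fun h_pos.symm measurableSet_Ioi)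
  rw [← intervalIntegral.integral_Iio_add_Ici hint_neg hint_pos, integral_Ici_eq_integral_Ioi,
    setIntegral_congr_fun measurableSet_Iio h_neg, setIntegral_congr_fun measurableSet_Ioi h_pos,
    integral_const_mul, integral_const_mul, add_comm]

lemma integral_comp_sign_mul_mul_exp_neg_mul_sq (φ : ℝ → ℝ) {b : ℝ} (hb : 0 < b) :
    ∫ x, φ (Real.sign x) * (x * exp (-b * x ^ 2)) = (φ 1 - φ (-1)) / (2 * b) := by
  rw [integral_comp_sign_mul (integrable_mul_exp_neg_mul_sq hb),
    integral_Ioi_mul_exp_neg_mul_sq hb, integral_Iio_mul_exp_neg_mul_sq hb]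
  ring

theorem stmt_0_general (ν σ h y : ℝ) (hν : 0 < ν) :
    ∫ g : ℝ, g * (1 / (2 * π * σ * ν)) *
        Real.exp (-(y - h * Real.sign g) ^ 2 / (2 * σ ^ 2) - g ^ 2 / (2 * ν ^ 2)) =
      ν * (Real.exp (-(h - y) ^ 2 / (2 * σ ^ 2)) - Real.exp (-(h + y) ^ 2 / (2 * σ ^ 2))) /
        (2 * π * σ) := by
  set φ : ℝ → ℝ := fun s => exp (-(y - h * s) ^ 2 / (2 * σ ^ 2)) / (2 * π * σ * ν)
  have h_integrand : ∀ g : ℝ, g * (1 / (2 * π * σ * ν)) *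
      exp (-(y - h * Real.sign g) ^ 2 / (2 * σ ^ 2) - g ^ 2 / (2 * ν ^ 2)) =
      φ (Real.sign g) * (g * exp (-(2 * ν ^ 2)⁻¹ * g ^ 2)) := by
    intro g
    rw [sub_eq_add_neg, exp_add, neg_mul, ← div_eq_inv_mul]
    ring
  simp_rw [h_integrand]
  rw [integral_comp_sign_mul_mul_exp_neg_mul_sq φ (by positivity)]
  simp only [φ, mul_one, mul_neg_one, sub_neg_eq_add, ← neg_sub h y, neg_sq, add_comm y h]
  field_simp

/-- Gaussian-prior numerator integral for the one-bit posterior mean. -/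
theorem stmt_0 (ν σ h y : ℝ) (hν : 0 < ν) (hσ : 0 < σ) :
    ∫ g : ℝ, g * (1 / (2 * π * σ * ν)) *
        Real.exp (-(y - h * Real.sign g) ^ 2 / (2 * σ ^ 2) - g ^ 2 / (2 * ν ^ 2)) =
      ν * (Real.exp (-(h - y) ^ 2 / (2 * σ ^ 2)) - Real.exp (-(h + y) ^ 2 / (2 * σ ^ 2))) /
        (2 * π * σ) :=
  stmt_0_general ν σ h y hν
end

section
/- (Scalar MMSE aggregation, Proposition 1.) For all real numbers ν > 0, σ > 0, h, and y, the posterior mean of a zero-mean Gaussian gradient entry given the one-bit channel output equals ( ∫_{-∞}^{∞} g · φ_ν(g) · φ_σ(y − h·sign(g)) dg ) / ( ∫_{-∞}^{∞} φ_ν(g) · φ_σ(y − h·sign(g)) dg ) = ν · √(2/π) · tanh( h·y / σ² ). -/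
/-!
The likelihood `φ_σ(y - h sign g)` takes the constant values `c₊ = φ_σ(y - h)` on `g > 0` and
`c₋ = φ_σ(y + h)` on `g < 0`, so both integrals reduce to half-line moments of `φ_ν`: the mass
`1/2` on each side, and the first moment `± ν / √(2π)` (an antiderivative of `g φ_ν(g)` is
`-ν² φ_ν(g)`). The ratio is therefore `(2ν / √(2π)) (c₊ - c₋) / (c₊ + c₋)`, and since
`c₊ / c₋ = exp (2hy / σ²)` the last factor is `tanh (hy / σ²)`.
-/

open Real MeasureTheory Set Filter Topology

noncomputable def gaussianDensity (s x : ℝ) : ℝ :=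
  1 / (√(2 * π) * s) * exp (-x ^ 2 / (2 * s ^ 2))

theorem integral_Iio_eq_integral_Ioi_comp_neg {E : Type*} [NormedAddCommGroup E]
    [NormedSpace ℝ E] (c : ℝ) (f : ℝ → E) :
    ∫ x in Iio c, f x = ∫ x in Ioi (-c), f (-x) := by
  rw [integral_comp_neg_Ioi, neg_neg, integral_Iic_eq_integral_Iio]

theorem integral_mul_comp_sign {f : ℝ → ℝ} (hf : Integrable f) (w : ℝ → ℝ) :
    ∫ x, f x * w (Real.sign x) =
      (∫ x in Iio 0, f x) * w (-1) + (∫ x in Ioi 0, f x) * w 1 := by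
  have hneg : EqOn (fun x ↦ f x * w (-1)) (fun x ↦ f x * w (Real.sign x)) (Iio 0) :=
    fun x hx ↦ by simp only [Real.sign_of_neg (mem_Iio.mp hx)]
  have hpos : EqOn (fun x ↦ f x * w 1) (fun x ↦ f x * w (Real.sign x)) (Ioi 0) :=
    fun x hx ↦ by simp only [Real.sign_of_pos (mem_Ioi.mp hx)]
  have hint_neg : IntegrableOn (fun x ↦ f x * w (Real.sign x)) (Iic 0) :=
    (integrableOn_Iic_iff_integrableOn_Iio).mpr
      ((hf.mul_const _).integrableOn.congr_fun hneg measurableSet_Iio)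
  have hint_pos : IntegrableOn (fun x ↦ f x * w (Real.sign x)) (Ioi 0) :=
    (hf.mul_const _).integrableOn.congr_fun hpos measurableSet_Ioi
  rw [← intervalIntegral.integral_Iic_add_Ioi hint_neg hint_pos, integral_Iic_eq_integral_Iio,
    ← setIntegral_congr_fun measurableSet_Iio hneg, ← setIntegral_congr_fun measurableSet_Ioi hpos,
    integral_mul_const, integral_mul_const]

section gaussianDensity

variable {s : ℝ}

theorem gaussianDensity_neg (s x : ℝ) : gaussianDensity s (-x) = gaussianDensity s x := by
  simp only [gaussianDensity, neg_sq]

theorem gaussianDensity_eq_mul_exp_neg_mul_sq (s x : ℝ) :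
    gaussianDensity s x = 1 / (√(2 * π) * s) * exp (-(2 * s ^ 2)⁻¹ * x ^ 2) := by
  rw [gaussianDensity]
  congr 2
  ring

theorem integrable_gaussianDensity (hs : s ≠ 0) : Integrable (gaussianDensity s) := by
  rw [funext (gaussianDensity_eq_mul_exp_neg_mul_sq s)]
  exact (integrable_exp_neg_mul_sq (by positivity)).const_mul _

theorem integrable_mul_gaussianDensity (hs : s ≠ 0) :
    Integrable fun x ↦ x * gaussianDensity s x := by
  simp_rw [gaussianDensity_eq_mul_exp_neg_mul_sq s, mul_left_comm _ (1 / (√(2 * π) * s))]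
  exact (integrable_mul_exp_neg_mul_sq (by positivity)).const_mul _

theorem hasDerivAt_gaussianDensity (hs : s ≠ 0) (x : ℝ) :
    HasDerivAt (gaussianDensity s) (-(x / s ^ 2) * gaussianDensity s x) x := by
  rw [funext (gaussianDensity_eq_mul_exp_neg_mul_sq s)]
  refine (((hasDerivAt_pow 2 x).const_mul (-(2 * s ^ 2)⁻¹)).exp.const_mul
    (1 / (√(2 * π) * s))).congr_deriv ?_
  field_simp
  ring

theorem tendsto_gaussianDensity_atTop (hs : s ≠ 0) :
    Tendsto (gaussianDensity s) atTop (𝓝 0) := by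
  have hexponent : Tendsto (fun x : ℝ ↦ -x ^ 2 / (2 * s ^ 2)) atTop atBot :=
    (tendsto_neg_atTop_atBot.comp (tendsto_pow_atTop two_ne_zero)).atBot_div_const
      (by positivity)
  have := (tendsto_exp_atBot.comp hexponent).const_mul (1 / (√(2 * π) * s))
  rwa [mul_zero] at this

theorem integral_Ioi_gaussianDensity (hs : 0 < s) :
    ∫ x in Ioi 0, gaussianDensity s x = 1 / 2 := by
  have hsqrt : √(π / (2 * s ^ 2)⁻¹) = √(2 * π) * s := by
    rw [div_inv_eq_mul, show π * (2 * s ^ 2) = 2 * π * s ^ 2 by ring,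
      sqrt_mul (by positivity), sqrt_sq hs.le]
  simp_rw [gaussianDensity_eq_mul_exp_neg_mul_sq s]
  rw [integral_const_mul, integral_gaussian_Ioi, hsqrt]
  field_simp

theorem integral_Iio_gaussianDensity (hs : 0 < s) :
    ∫ x in Iio 0, gaussianDensity s x = 1 / 2 := by
  simp_rw [integral_Iio_eq_integral_Ioi_comp_neg, neg_zero, gaussianDensity_neg,
    integral_Ioi_gaussianDensity hs]

theorem integral_Ioi_mul_gaussianDensity (hs : s ≠ 0) :
    ∫ x in Ioi 0, x * gaussianDensity s x = s / √(2 * π) := by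
  have hderiv (x : ℝ) : HasDerivAt (fun x ↦ -s ^ 2 * gaussianDensity s x)
      (x * gaussianDensity s x) x :=
    ((hasDerivAt_gaussianDensity hs x).const_mul (-s ^ 2)).congr_deriv (by field_simp)
  rw [integral_Ioi_of_hasDerivAt_of_tendsto' (fun x _ ↦ hderiv x)
    (integrable_mul_gaussianDensity hs).integrableOn
    (by simpa using (tendsto_gaussianDensity_atTop hs).const_mul (-s ^ 2))]
  rw [gaussianDensity, zero_pow two_ne_zero, neg_zero, zero_div, exp_zero]
  field_simp
  ring

theorem integral_Iio_mul_gaussianDensity (hs : s ≠ 0) :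
    ∫ x in Iio 0, x * gaussianDensity s x = -(s / √(2 * π)) := by
  simp_rw [integral_Iio_eq_integral_Ioi_comp_neg, neg_zero, gaussianDensity_neg, neg_mul,
    integral_neg, integral_Ioi_mul_gaussianDensity hs]

theorem gaussianDensity_sub_div_add_eq_tanh (hs : s ≠ 0) (h y : ℝ) :
    (gaussianDensity s (y - h) - gaussianDensity s (y + h)) /
      (gaussianDensity s (y - h) + gaussianDensity s (y + h)) = tanh (h * y / s ^ 2) := by
  set A := 1 / (√(2 * π) * s) * exp (-(y ^ 2 + h ^ 2) / (2 * s ^ 2))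
  have hA : A ≠ 0 := by positivity
  have hminus : gaussianDensity s (y - h) = A * exp (h * y / s ^ 2) := by
    rw [gaussianDensity, mul_assoc, ← exp_add]
    congr 2
    field_simp
    ring
  have hplus : gaussianDensity s (y + h) = A * exp (-(h * y / s ^ 2)) := by
    rw [gaussianDensity, mul_assoc, ← exp_add]
    congr 2
    field_simp
    ring
  rw [hminus, hplus, ← mul_sub, ← mul_add, mul_div_mul_left _ _ hA, tanh_eq]

end gaussianDensity

/-- Proposition 1: scalar MMSE aggregation. The posterior mean of a zero-mean Gaussian
gradient entry given the one-bit channel output. -/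
theorem stmt_3 (ν σ h y : ℝ) (hν : 0 < ν) (hσ : 0 < σ)
    (φ : ℝ → ℝ → ℝ)
    (hφ : ∀ s x : ℝ, φ s x = (1 / (Real.sqrt (2 * π) * s)) * Real.exp (-x ^ 2 / (2 * s ^ 2))) :
    (∫ g : ℝ, g * φ ν g * φ σ (y - h * Real.sign g)) /
      (∫ g : ℝ, φ ν g * φ σ (y - h * Real.sign g)) =
    ν * Real.sqrt (2 / π) * Real.tanh (h * y / σ ^ 2) := by
  obtain rfl : φ = gaussianDensity := funext₂ hφ
  have hnum := integral_mul_comp_sign (integrable_mul_gaussianDensity hν.ne')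
    fun s ↦ gaussianDensity σ (y - h * s)
  have hden := integral_mul_comp_sign (integrable_gaussianDensity hν.ne')
    fun s ↦ gaussianDensity σ (y - h * s)
  have hsqrt : √(2 / π) = 2 / √(2 * π) := by
    rw [sqrt_div' _ pi_pos.le, sqrt_mul zero_le_two, ← div_div, div_sqrt]
  rw [hnum, hden, integral_Iio_mul_gaussianDensity hν.ne', integral_Ioi_mul_gaussianDensity hν.ne',
    integral_Iio_gaussianDensity hν, integral_Ioi_gaussianDensity hν, ← mul_add,
    div_mul_eq_div_div, hsqrt, ← gaussianDensity_sub_div_add_eq_tanh hσ.ne', mul_one,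
    mul_neg_one, sub_neg_eq_add]
  ring
end

section
/- (Laplacian-prior MMSE aggregation, Proposition 3.) For all real numbers λ > 0, σ > 0, h, and y, the posterior mean of a zero-mean Laplacian gradient entry given the one-bit channel output equals ( ∫_{-∞}^{∞} g · (1/(2λ))·exp(−|g|/λ) · φ_σ(y − h·sign(g)) dg ) / ( ∫_{-∞}^{∞} (1/(2λ))·exp(−|g|/λ) · φ_σ(y − h·sign(g)) dg ) = λ · tanh( h·y / σ² ). -/
/-!
On each half-line the likelihood `φ σ (y - h * sign g)` is the constant `φ σ (y ∓ h)`, so both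
integrals reduce to the moments `∫₀^∞ e^{-g/λ} = λ` and `∫₀^∞ g e^{-g/λ} = λ²` of the Laplace
prior, and the quotient is `λ (φ(y - h) - φ(y + h)) / (φ(y - h) + φ(y + h))`. Factoring
`exp (-(y² + h²) / (2σ²))` out of both Gaussians leaves `e^{±hy/σ²}`, whence the `tanh`.
-/

open Real MeasureTheory Set

theorem integral_eq_setIntegral_Ioi_add_comp_neg {E : Type*} [NormedAddCommGroup E]
    [NormedSpace ℝ E] {f : ℝ → E} (hpos : IntegrableOn f (Ioi 0))
    (hneg : IntegrableOn (fun x => f (-x)) (Ioi 0)) :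
    ∫ x, f x = (∫ x in Ioi 0, f x) + ∫ x in Ioi 0, f (-x) := by
  have hIic : IntegrableOn f (Iic 0) := by
    rw [← (Measure.measurePreserving_neg (volume : Measure ℝ)).integrableOn_comp_preimage
      (Homeomorph.neg ℝ).measurableEmbedding, neg_preimage, neg_Iic, neg_zero,
      integrableOn_Ici_iff_integrableOn_Ioi]
    exact hneg
  rw [integral_comp_neg_Ioi, neg_zero, add_comm, ← setIntegral_union (Iic_disjoint_Ioi le_rfl) measurableSet_Ioi hIic hpos,
    Iic_union_Ioi, Measure.restrict_univ]

theorem integral_eq_add_mul_setIntegral_Ioi {f F : ℝ → ℝ} (a b : ℝ)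
    (hf : IntegrableOn f (Ioi 0)) (hpos : ∀ x > 0, F x = a * f x)
    (hneg : ∀ x > 0, F (-x) = b * f x) :
    ∫ x, F x = (a + b) * ∫ x in Ioi 0, f x := by
  have hpos' : EqOn (fun x => a * f x) F (Ioi 0) := fun x hx => (hpos x hx).symm
  have hneg' : EqOn (fun x => b * f x) (fun x => F (-x)) (Ioi 0) := fun x hx => (hneg x hx).symm
  rw [integral_eq_setIntegral_Ioi_add_comp_neg
      (IntegrableOn.congr_fun (hf.const_mul a) hpos' measurableSet_Ioi)
      (IntegrableOn.congr_fun (hf.const_mul b) hneg' measurableSet_Ioi),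
    ← setIntegral_congr_fun measurableSet_Ioi hpos',
    ← setIntegral_congr_fun measurableSet_Ioi hneg',
    integral_const_mul, integral_const_mul, add_mul]

theorem integral_exp_neg_div_Ioi {l : ℝ} (hl : 0 < l) : ∫ x in Ioi 0, exp (-x / l) = l := by
  have := integral_exp_mul_Ioi (a := -l⁻¹) (by simpa using hl) 0
  simp only [mul_zero, exp_zero, neg_mul, div_neg] at this
  simpa [neg_div, div_eq_inv_mul] using this

theorem integral_mul_exp_neg_div_Ioi {l : ℝ} (hl : 0 < l) :
    ∫ x in Ioi 0, x * exp (-x / l) = l ^ 2 := by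
  have := integral_rpow_mul_exp_neg_mul_Ioi two_pos (inv_pos.mpr hl)
  rw [show (2 : ℝ) - 1 = 1 by norm_num, one_div, inv_inv, rpow_two, Gamma_two, mul_one] at this
  simpa [neg_div, div_eq_inv_mul] using this

theorem integrableOn_mul_exp_neg_div_Ioi {l : ℝ} (hl : 0 < l) :
    IntegrableOn (fun x => x * exp (-x / l)) (Ioi 0) :=
  Integrable.of_integral_ne_zero (by rw [integral_mul_exp_neg_div_Ioi hl]; positivity)

theorem integrableOn_exp_neg_div_Ioi {l : ℝ} (hl : 0 < l) :
    IntegrableOn (fun x => exp (-x / l)) (Ioi 0) :=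
  Integrable.of_integral_ne_zero (by rw [integral_exp_neg_div_Ioi hl]; positivity)

theorem exp_sq_sub_div_exp_sq_add_eq_tanh (c s h y : ℝ) (hc : c ≠ 0) :
    (c * exp (-(y - h) ^ 2 / (2 * s ^ 2)) - c * exp (-(y + h) ^ 2 / (2 * s ^ 2))) /
      (c * exp (-(y - h) ^ 2 / (2 * s ^ 2)) + c * exp (-(y + h) ^ 2 / (2 * s ^ 2))) =
    tanh (h * y / s ^ 2) := by
  set t := h * y / s ^ 2
  set k := c * exp (-(y ^ 2 + h ^ 2) / (2 * s ^ 2))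
  have hk : k ≠ 0 := mul_ne_zero hc (exp_pos _).ne'
  have hm : c * exp (-(y - h) ^ 2 / (2 * s ^ 2)) = k * exp t := by
    rw [mul_assoc, ← exp_add]; congr 2; ring
  have hp : c * exp (-(y + h) ^ 2 / (2 * s ^ 2)) = k * exp (-t) := by
    rw [mul_assoc, ← exp_add]; congr 2; ring
  rw [hm, hp, ← mul_sub, ← mul_add, mul_div_mul_left _ _ hk, tanh_eq]

/-- Proposition 3: Laplacian-prior MMSE aggregation. -/
theorem stmt_4 (lam σ h y : ℝ) (hlam : 0 < lam) (hσ : 0 < σ)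
    (φ : ℝ → ℝ → ℝ)
    (hφ : ∀ s x : ℝ, φ s x = (1 / (Real.sqrt (2 * π) * s)) * Real.exp (-x ^ 2 / (2 * s ^ 2))) :
    (∫ g : ℝ, g * ((1 / (2 * lam)) * Real.exp (-|g| / lam)) * φ σ (y - h * Real.sign g)) /
      (∫ g : ℝ, (1 / (2 * lam)) * Real.exp (-|g| / lam) * φ σ (y - h * Real.sign g)) =
    lam * Real.tanh (h * y / σ ^ 2) := by
  set A := φ σ (y - h)
  set B := φ σ (y + h)
  have hsign_pos : ∀ x > 0, φ σ (y - h * Real.sign x) = A := fun x hx => by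
    rw [Real.sign_of_pos hx, mul_one]
  have hsign_neg : ∀ x > 0, φ σ (y - h * Real.sign (-x)) = B := fun x hx => by
    rw [Real.sign_of_neg (neg_neg_of_pos hx), mul_neg_one, sub_neg_eq_add]
  rw [integral_eq_add_mul_setIntegral_Ioi (A / (2 * lam)) (-(B / (2 * lam)))
      (integrableOn_mul_exp_neg_div_Ioi hlam)
      (fun x hx => by rw [hsign_pos x hx, abs_of_pos hx]; ring)
      (fun x hx => by rw [hsign_neg x hx, abs_neg, abs_of_pos hx]; ring),
    integral_eq_add_mul_setIntegral_Ioi (A / (2 * lam)) (B / (2 * lam))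
      (integrableOn_exp_neg_div_Ioi hlam)
      (fun x hx => by rw [hsign_pos x hx, abs_of_pos hx]; ring)
      (fun x hx => by rw [hsign_neg x hx, abs_neg, abs_of_pos hx]; ring),
    integral_mul_exp_neg_div_Ioi hlam, integral_exp_neg_div_Ioi hlam]
  have hc : 1 / (Real.sqrt (2 * π) * σ) ≠ 0 := by positivity
  have hAB : A + B ≠ 0 := by simp only [A, B, hφ]; positivity
  have htanh : Real.tanh (h * y / σ ^ 2) = (A - B) / (A + B) := by
    simp only [A, B, hφ]; exact (exp_sq_sub_div_exp_sq_add_eq_tanh _ σ h y hc).symm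
  rw [htanh]
  field_simp
  ring
end

section
/- (One-step expected descent.) Let E be a finite-dimensional real inner product space, L > 0, and f : E → ℝ a differentiable function whose gradient ∇f satisfies the quadratic upper bound f(y) ≤ f(x) + ⟨∇f(x), y − x⟩ + (L/2)·‖y − x‖² for all x, y ∈ E. Let (Ω, μ) be a probability space, W : Ω → E and e : Ω → E random variables, and γ > 0, σ² ≥ 0 such that E[⟨∇f(W), e⟩] = 0 and E[‖e‖²] ≤ σ², with f(W), f(W′), ‖∇f(W)‖², ‖e‖², and ⟨∇f(W), e⟩ integrable, where W′ = W − γ·(∇f(W) + e). Then E[f(W′)] ≤ E[f(W)] − γ·(1 − γL/2)·E[‖∇f(W)‖²] + (γ²·L/2)·σ². -/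
/-!
Apply the quadratic upper bound at `W` to the step `-γ (∇f(W) + e)` pointwise and integrate:
the bound is affine in `‖∇f(W)‖²`, `⟪∇f(W), e⟫` and `‖e‖²`, the cross term integrates to zero,
and the mean-squared noise is at most `σ²`.
-/

open Real MeasureTheory

theorem le_of_quadratic_upper_bound_noisy_step {E : Type*} [NormedAddCommGroup E]
    [InnerProductSpace ℝ E] {f : E → ℝ} {L : ℝ} {x g : E}
    (hx : ∀ y, f y ≤ f x + inner ℝ g (y - x) + (L / 2) * ‖y - x‖ ^ 2) (γ : ℝ) (v : E) :
    f (x - γ • (g + v)) ≤ f x - γ * (1 - γ * L / 2) * ‖g‖ ^ 2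
      + γ * (γ * L - 1) * inner ℝ g v + γ ^ 2 * L / 2 * ‖v‖ ^ 2 := by
  have h := hx (x - γ • (g + v))
  have hinner : inner ℝ g (x - γ • (g + v) - x) = -γ * (‖g‖ ^ 2 + inner ℝ g v) := by
    rw [sub_sub_cancel_left, inner_neg_right, inner_smul_right, inner_add_right,
      real_inner_self_eq_norm_sq]
    ring
  have hnorm : ‖x - γ • (g + v) - x‖ ^ 2
      = γ ^ 2 * (‖g‖ ^ 2 + 2 * inner ℝ g v + ‖v‖ ^ 2) := by
    rw [sub_sub_cancel_left, norm_neg, norm_smul, mul_pow, Real.norm_eq_abs, sq_abs,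
      norm_add_sq_real]
  rw [hinner, hnorm] at h
  linarith

theorem stmt_13_general {E : Type*} [NormedAddCommGroup E] [InnerProductSpace ℝ E]
    [FiniteDimensional ℝ E]
    (L : ℝ) (hL : 0 < L) (f : E → ℝ)
    (hsmooth : ∀ x y : E, f y ≤ f x + inner ℝ (gradient f x) (y - x) +
      (L / 2) * ‖y - x‖ ^ 2)
    {Ω : Type*} [MeasurableSpace Ω] (μ : Measure Ω) [IsProbabilityMeasure μ]
    (W e : Ω → E) (γ : ℝ) (σsq : ℝ)
    (W' : Ω → E) (hW' : W' = fun ω => W ω - γ • (gradient f (W ω) + e ω))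
    (hunbiased : ∫ ω, (inner ℝ (gradient f (W ω)) (e ω) : ℝ) ∂μ = 0)
    (hmse : ∫ ω, ‖e ω‖ ^ 2 ∂μ ≤ σsq)
    (hint1 : Integrable (fun ω => f (W ω)) μ)
    (hint2 : Integrable (fun ω => f (W' ω)) μ)
    (hint3 : Integrable (fun ω => ‖gradient f (W ω)‖ ^ 2) μ)
    (hint4 : Integrable (fun ω => ‖e ω‖ ^ 2) μ)
    (hint5 : Integrable (fun ω => (inner ℝ (gradient f (W ω)) (e ω) : ℝ)) μ) :
    ∫ ω, f (W' ω) ∂μ ≤ ∫ ω, f (W ω) ∂μ -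
      γ * (1 - γ * L / 2) * ∫ ω, ‖gradient f (W ω)‖ ^ 2 ∂μ + γ ^ 2 * L / 2 * σsq := by
  subst hW'
  have hbound_int₁ : Integrable (fun ω => f (W ω)
      - γ * (1 - γ * L / 2) * ‖gradient f (W ω)‖ ^ 2) μ :=
    hint1.sub (hint3.const_mul _)
  have hbound_int₂ : Integrable (fun ω => f (W ω)
      - γ * (1 - γ * L / 2) * ‖gradient f (W ω)‖ ^ 2
      + γ * (γ * L - 1) * inner ℝ (gradient f (W ω)) (e ω)) μ :=
    hbound_int₁.add (hint5.const_mul _)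
  calc ∫ ω, f (W ω - γ • (gradient f (W ω) + e ω)) ∂μ
      ≤ ∫ ω, (f (W ω) - γ * (1 - γ * L / 2) * ‖gradient f (W ω)‖ ^ 2
          + γ * (γ * L - 1) * inner ℝ (gradient f (W ω)) (e ω)
          + γ ^ 2 * L / 2 * ‖e ω‖ ^ 2) ∂μ :=
        integral_mono hint2 (hbound_int₂.add (hint4.const_mul _))
          fun ω => le_of_quadratic_upper_bound_noisy_step (hsmooth (W ω)) γ (e ω)
    _ = ∫ ω, f (W ω) ∂μ - γ * (1 - γ * L / 2) * ∫ ω, ‖gradient f (W ω)‖ ^ 2 ∂μ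
          + γ ^ 2 * L / 2 * ∫ ω, ‖e ω‖ ^ 2 ∂μ := by
        rw [integral_add hbound_int₂ (hint4.const_mul _), integral_add hbound_int₁
          (hint5.const_mul _), integral_sub hint1 (hint3.const_mul _), integral_const_mul,
          integral_const_mul, integral_const_mul, hunbiased]
        ring
    _ ≤ _ := by gcongr

/-- One-step expected descent for gradient descent with a noisy aggregated gradient. -/
theorem stmt_13 {E : Type*} [NormedAddCommGroup E] [InnerProductSpace ℝ E]
    [FiniteDimensional ℝ E]
    (L : ℝ) (hL : 0 < L) (f : E → ℝ) (hdiff : Differentiable ℝ f)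
    (hsmooth : ∀ x y : E, f y ≤ f x + inner ℝ (gradient f x) (y - x) +
      (L / 2) * ‖y - x‖ ^ 2)
    {Ω : Type*} [MeasurableSpace Ω] (μ : Measure Ω) [IsProbabilityMeasure μ]
    (W e : Ω → E) (γ : ℝ) (hγ : 0 < γ) (σsq : ℝ) (hσsq : 0 ≤ σsq)
    (W' : Ω → E) (hW' : W' = fun ω => W ω - γ • (gradient f (W ω) + e ω))
    (hunbiased : ∫ ω, (inner ℝ (gradient f (W ω)) (e ω) : ℝ) ∂μ = 0)
    (hmse : ∫ ω, ‖e ω‖ ^ 2 ∂μ ≤ σsq)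
    (hint1 : Integrable (fun ω => f (W ω)) μ)
    (hint2 : Integrable (fun ω => f (W' ω)) μ)
    (hint3 : Integrable (fun ω => ‖gradient f (W ω)‖ ^ 2) μ)
    (hint4 : Integrable (fun ω => ‖e ω‖ ^ 2) μ)
    (hint5 : Integrable (fun ω => (inner ℝ (gradient f (W ω)) (e ω) : ℝ)) μ) :
    ∫ ω, f (W' ω) ∂μ ≤ ∫ ω, f (W ω) ∂μ -
      γ * (1 - γ * L / 2) * ∫ ω, ‖gradient f (W ω)‖ ^ 2 ∂μ + γ ^ 2 * L / 2 * σsq :=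
  stmt_13_general L hL f hsmooth μ W e γ σsq W' hW' hunbiased hmse hint1 hint2 hint3 hint4 hint5
end

section
/- (Theorem 2, convergence of SBFL.) Let E be a finite-dimensional real inner product space, L > 0, γ > 0 with γ·L < 2, σ² ≥ 0, and f : E → ℝ a differentiable function bounded below by f* ∈ ℝ and satisfying f(y) ≤ f(x) + ⟨∇f(x), y − x⟩ + (L/2)·‖y − x‖² for all x, y. Let (Ω, μ) be a probability space, w⁰ ∈ E, and let random sequences W_t, e_t : Ω → E satisfy W_0 = w⁰ (constant) and W_{t+1} = W_t − (γ/√(t+1))·(∇f(W_t) + e_t) for all t ≥ 0, where for every t: E[⟨∇f(W_t), e_t⟩] = 0, E[‖e_t‖²] ≤ σ², and f(W_t), ‖∇f(W_t)‖², ‖e_t‖², ⟨∇f(W_t), e_t⟩ are integrable. Then for every integer T ≥ 1: (1/T)·Σ_{t=0}^{T−1} E[‖∇f(W_t)‖²] ≤ (1/√T)·[ (f(w⁰) − f*) / (γ·(1 − γL/2)) + σ²·(1 + ln T)·(γL/2) / (1 − γL/2) ]. In particular, the time-averaged expected squared gradient norm tends to 0 as T → ∞, so the iterates converge to a stationary point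 of the (possibly non-convex) loss. -/
open Real MeasureTheory Finset Filter Topology

/-!
Applying the quadratic upper bound along the step `W (t+1) - W t = -γₜ (∇f (W t) + e t)`,
`γₜ = γ / √(t+1)`, and taking expectations (the cross term vanishes by unbiasedness) gives the
descent inequality `γₜ (1 - L γₜ / 2) E‖∇f (W t)‖² ≤ E f (W t) - E f (W (t+1)) + (L/2) γₜ² σ²`.
For `t < T` we have `γ / √T ≤ γₜ ≤ γ`, so summing over `t < T` telescopes the losses down to
`f w⁰ - f*`, while `∑ γₜ² = γ² H_T ≤ γ² (1 + log T)`. Dividing by `γ (1 - γL/2) √T` gives the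
rate, which is `O(log T / √T) → 0`.
-/

theorem tendsto_add_mul_log_div_sqrt_atTop (a b : ℝ) :
    Tendsto (fun x => (a + b * log x) / √x) atTop (𝓝 0) := by
  have hconst : (fun _ : ℝ => a) =o[atTop] fun x => x ^ (1 / 2 : ℝ) :=
    Asymptotics.isLittleO_const_left.2 <|
      .inr (tendsto_norm_atTop_atTop.comp (tendsto_rpow_atTop (by norm_num)))
  simpa only [sqrt_eq_rpow] using
    (hconst.add ((isLittleO_log_rpow_atTop (by norm_num)).const_mul_left b)).tendsto_div_nhds_zero

theorem sum_range_one_div_succ_le_one_add_log (n : ℕ) :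
    ∑ t ∈ range n, 1 / ((t : ℝ) + 1) ≤ 1 + log n := by
  simpa [harmonic] using harmonic_le_one_add_log n

section Descent

variable {E : Type*} [NormedAddCommGroup E] [InnerProductSpace ℝ E]
  {f : E → ℝ} {g : E → E} {L : ℝ}

theorem descent_perturbed_step
    (hsmooth : ∀ x y, f y ≤ f x + inner ℝ (g x) (y - x) + L / 2 * ‖y - x‖ ^ 2)
    (x e : E) (c : ℝ) :
    f (x - c • (g x + e)) ≤ f x - c * (1 - L * c / 2) * ‖g x‖ ^ 2
      - c * (1 - L * c) * inner ℝ (g x) e + L / 2 * c ^ 2 * ‖e‖ ^ 2 := by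
  have h := hsmooth x (x - c • (g x + e))
  rw [sub_sub_cancel_left, inner_neg_right, real_inner_smul_right, inner_add_right,
    real_inner_self_eq_norm_sq, norm_neg, norm_smul, mul_pow, norm_add_sq_real,
    Real.norm_eq_abs, sq_abs] at h
  linarith

theorem integral_descent_perturbed_step
    (hsmooth : ∀ x y, f y ≤ f x + inner ℝ (g x) (y - x) + L / 2 * ‖y - x‖ ^ 2) (hL : 0 ≤ L)
    {Ω : Type*} [MeasurableSpace Ω] {μ : Measure Ω} {X e : Ω → E} {c σsq : ℝ}
    (hunbiased : ∫ ω, inner ℝ (g (X ω)) (e ω) ∂μ = 0) (hmse : ∫ ω, ‖e ω‖ ^ 2 ∂μ ≤ σsq)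
    (hfX : Integrable (fun ω => f (X ω)) μ)
    (hfX' : Integrable (fun ω => f (X ω - c • (g (X ω) + e ω))) μ)
    (hg : Integrable (fun ω => ‖g (X ω)‖ ^ 2) μ) (he : Integrable (fun ω => ‖e ω‖ ^ 2) μ)
    (hge : Integrable (fun ω => inner ℝ (g (X ω)) (e ω)) μ) :
    c * (1 - L * c / 2) * ∫ ω, ‖g (X ω)‖ ^ 2 ∂μ ≤
      ∫ ω, f (X ω) ∂μ - ∫ ω, f (X ω - c • (g (X ω) + e ω)) ∂μ + L / 2 * c ^ 2 * σsq := by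
  have hfg : Integrable (fun ω => f (X ω) - c * (1 - L * c / 2) * ‖g (X ω)‖ ^ 2) μ :=
    hfX.sub (hg.const_mul _)
  have hfge : Integrable (fun ω => f (X ω) - c * (1 - L * c / 2) * ‖g (X ω)‖ ^ 2
      - c * (1 - L * c) * inner ℝ (g (X ω)) (e ω)) μ :=
    hfg.sub (hge.const_mul _)
  have hmono : ∫ ω, f (X ω - c • (g (X ω) + e ω)) ∂μ ≤
      ∫ ω, (f (X ω) - c * (1 - L * c / 2) * ‖g (X ω)‖ ^ 2
        - c * (1 - L * c) * inner ℝ (g (X ω)) (e ω) + L / 2 * c ^ 2 * ‖e ω‖ ^ 2) ∂μ :=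
    integral_mono hfX' (hfge.add (he.const_mul _))
      fun ω => descent_perturbed_step hsmooth (X ω) (e ω) c
  rw [integral_add hfge (he.const_mul _), integral_sub hfg (hge.const_mul _),
    integral_sub hfX (hg.const_mul _), integral_const_mul, integral_const_mul,
    integral_const_mul, hunbiased] at hmono
  have hnoise := mul_le_mul_of_nonneg_left hmse (by positivity : 0 ≤ L / 2 * c ^ 2)
  linarith

end Descent

theorem sum_le_of_descent {L γ σsq Δ : ℝ} {F G : ℕ → ℝ} (hL : 0 ≤ L) (hγ : 0 < γ)
    (hγL : γ * L ≤ 2) (hσsq : 0 ≤ σsq) (hG : ∀ t, 0 ≤ G t) (hF : ∀ t, F 0 - F t ≤ Δ)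
    (hdescent : ∀ t : ℕ, γ / √(t + 1) * (1 - L * (γ / √(t + 1)) / 2) * G t ≤
      F t - F (t + 1) + L / 2 * (γ / √(t + 1)) ^ 2 * σsq) (T : ℕ) :
    γ * (1 - γ * L / 2) / √T * ∑ t ∈ range T, G t ≤
      Δ + L / 2 * γ ^ 2 * σsq * (1 + log T) := by
  have hstep : ∀ t ∈ range T,
      γ * (1 - γ * L / 2) / √T ≤ γ / √(t + 1) * (1 - L * (γ / √(t + 1)) / 2) := by
    intro t ht
    have hsucc : (t : ℝ) + 1 ≤ T := by exact_mod_cast Nat.succ_le_of_lt (mem_range.1 ht)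
    have hc_le : γ / √(t + 1) ≤ γ :=
      div_le_self hγ.le (one_le_sqrt.2 (le_add_of_nonneg_left t.cast_nonneg))
    have hc_ge : γ / √T ≤ γ / √(t + 1) :=
      div_le_div_of_nonneg_left hγ.le (by positivity) (sqrt_le_sqrt hsucc)
    calc γ * (1 - γ * L / 2) / √T = γ / √T * (1 - γ * L / 2) := by ring
      _ ≤ γ / √(t + 1) * (1 - L * (γ / √(t + 1)) / 2) :=
        mul_le_mul hc_ge (by nlinarith) (by linarith) (by positivity)
  have hsq : ∀ t : ℕ, (γ / √(t + 1)) ^ 2 = γ ^ 2 * (1 / (t + 1)) := fun t => by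
    rw [div_pow, sq_sqrt (by positivity)]; ring
  calc γ * (1 - γ * L / 2) / √T * ∑ t ∈ range T, G t
      ≤ ∑ t ∈ range T, γ / √(t + 1) * (1 - L * (γ / √(t + 1)) / 2) * G t := by
        rw [mul_sum]
        exact sum_le_sum fun t ht => mul_le_mul_of_nonneg_right (hstep t ht) (hG t)
    _ ≤ ∑ t ∈ range T, (F t - F (t + 1) + L / 2 * (γ / √(t + 1)) ^ 2 * σsq) :=
        sum_le_sum fun t _ => hdescent t
    _ = F 0 - F T + L / 2 * γ ^ 2 * σsq * ∑ t ∈ range T, 1 / ((t : ℝ) + 1) := by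
        rw [sum_add_distrib, sum_range_sub', mul_sum]
        congr 1
        exact sum_congr rfl fun t _ => by rw [hsq]; ring
    _ ≤ Δ + L / 2 * γ ^ 2 * σsq * (1 + log T) :=
        add_le_add (hF T) (mul_le_mul_of_nonneg_left (sum_range_one_div_succ_le_one_add_log T)
          (by positivity))

theorem average_le_of_descent {L γ σsq Δ : ℝ} {F G : ℕ → ℝ} (hL : 0 ≤ L) (hγ : 0 < γ)
    (hγL : γ * L < 2) (hσsq : 0 ≤ σsq) (hG : ∀ t, 0 ≤ G t) (hF : ∀ t, F 0 - F t ≤ Δ)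
    (hdescent : ∀ t : ℕ, γ / √(t + 1) * (1 - L * (γ / √(t + 1)) / 2) * G t ≤
      F t - F (t + 1) + L / 2 * (γ / √(t + 1)) ^ 2 * σsq) (T : ℕ) :
    1 / (T : ℝ) * ∑ t ∈ range T, G t ≤
      1 / √T * (Δ / (γ * (1 - γ * L / 2)) +
        σsq * (1 + log T) * (γ * L / 2) / (1 - γ * L / 2)) := by
  rcases T.eq_zero_or_pos with rfl | hT
  · simp
  have hs : 0 < √(T : ℝ) := sqrt_pos.2 (by exact_mod_cast hT)
  have ha : 0 < 1 - γ * L / 2 := by linarith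
  have ha' : 2 - γ * L ≠ 0 := by linarith
  have hsum := sum_le_of_descent hL hγ hγL.le hσsq hG hF hdescent T
  calc 1 / (T : ℝ) * ∑ t ∈ range T, G t
      = (γ * (1 - γ * L / 2) / √T * ∑ t ∈ range T, G t) / (γ * (1 - γ * L / 2)) / √T := by
        field_simp
        rw [sq_sqrt T.cast_nonneg, mul_comm]
    _ ≤ (Δ + L / 2 * γ ^ 2 * σsq * (1 + log T)) / (γ * (1 - γ * L / 2)) / √T := by gcongr
    _ = _ := by field_simp

theorem stmt_15_general {E : Type*} [NormedAddCommGroup E] [InnerProductSpace ℝ E]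
    [FiniteDimensional ℝ E]
    (L γ σsq fstar : ℝ) (hL : 0 < L) (hγ : 0 < γ) (hγL : γ * L < 2) (hσsq : 0 ≤ σsq)
    (f : E → ℝ) (hlb : ∀ x, fstar ≤ f x)
    (hsmooth : ∀ x y : E, f y ≤ f x + inner ℝ (gradient f x) (y - x) +
      (L / 2) * ‖y - x‖ ^ 2)
    {Ω : Type*} [MeasurableSpace Ω] (μ : Measure Ω) [IsProbabilityMeasure μ]
    (w0 : E) (W e : ℕ → Ω → E)
    (hW0 : W 0 = fun _ => w0)
    (hWrec : ∀ t : ℕ, W (t + 1) =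
      fun ω => W t ω - (γ / Real.sqrt (t + 1)) • (gradient f (W t ω) + e t ω))
    (hunbiased : ∀ t, ∫ ω, (inner ℝ (gradient f (W t ω)) (e t ω) : ℝ) ∂μ = 0)
    (hmse : ∀ t, ∫ ω, ‖e t ω‖ ^ 2 ∂μ ≤ σsq)
    (hint1 : ∀ t, Integrable (fun ω => f (W t ω)) μ)
    (hint2 : ∀ t, Integrable (fun ω => ‖gradient f (W t ω)‖ ^ 2) μ)
    (hint3 : ∀ t, Integrable (fun ω => ‖e t ω‖ ^ 2) μ)
    (hint4 : ∀ t, Integrable (fun ω => (inner ℝ (gradient f (W t ω)) (e t ω) : ℝ)) μ) :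
    (∀ T : ℕ, 1 ≤ T →
      (1 / (T : ℝ)) * ∑ t ∈ range T, ∫ ω, ‖gradient f (W t ω)‖ ^ 2 ∂μ ≤
        (1 / Real.sqrt T) * ((f w0 - fstar) / (γ * (1 - γ * L / 2)) +
          σsq * (1 + Real.log T) * (γ * L / 2) / (1 - γ * L / 2))) ∧
    Tendsto (fun T : ℕ =>
        (1 / (T : ℝ)) * ∑ t ∈ range T, ∫ ω, ‖gradient f (W t ω)‖ ^ 2 ∂μ)
      atTop (𝓝 0) := by
  have hdescent (t : ℕ) : γ / √(t + 1) * (1 - L * (γ / √(t + 1)) / 2) *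
      ∫ ω, ‖gradient f (W t ω)‖ ^ 2 ∂μ ≤ ∫ ω, f (W t ω) ∂μ - ∫ ω, f (W (t + 1) ω) ∂μ +
        L / 2 * (γ / √(t + 1)) ^ 2 * σsq := by
    have hnext := hint1 (t + 1)
    simp only [hWrec] at hnext ⊢
    exact integral_descent_perturbed_step hsmooth hL.le (hunbiased t)
      (hmse t) (hint1 t) hnext (hint2 t) (hint3 t) (hint4 t)
  have hbelow (t : ℕ) : ∫ ω, f (W 0 ω) ∂μ - ∫ ω, f (W t ω) ∂μ ≤ f w0 - fstar := by
    have := integral_mono (integrable_const fstar) (hint1 t) fun ω => hlb (W t ω)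
    simp only [hW0, integral_const, probReal_univ, one_smul] at this ⊢
    linarith
  have hbound := average_le_of_descent hL.le hγ hγL hσsq
    (fun t => integral_nonneg fun ω => by positivity) hbelow hdescent
  refine ⟨fun T _ => hbound T, ?_⟩
  refine tendsto_of_tendsto_of_tendsto_of_le_of_le tendsto_const_nhds ?_ (fun T => ?_) hbound
  · convert (tendsto_add_mul_log_div_sqrt_atTop
        ((f w0 - fstar) / (γ * (1 - γ * L / 2)) + σsq * (γ * L / 2) / (1 - γ * L / 2))
        (σsq * (γ * L / 2) / (1 - γ * L / 2))).comp tendsto_natCast_atTop_atTop using 2 with T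
    simp only [Function.comp_apply]
    ring
  · exact mul_nonneg (by positivity) (sum_nonneg fun t _ => integral_nonneg fun ω => by positivity)

/-- Theorem 2: convergence of SBFL for L-smooth non-convex losses bounded below, with
learning rate γ/√(t+1) and unbiased aggregation error of mean-squared norm at most σ². -/
theorem stmt_15 {E : Type*} [NormedAddCommGroup E] [InnerProductSpace ℝ E]
    [FiniteDimensional ℝ E]
    (L γ σsq fstar : ℝ) (hL : 0 < L) (hγ : 0 < γ) (hγL : γ * L < 2) (hσsq : 0 ≤ σsq)
    (f : E → ℝ) (hdiff : Differentiable ℝ f) (hlb : ∀ x, fstar ≤ f x)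
    (hsmooth : ∀ x y : E, f y ≤ f x + inner ℝ (gradient f x) (y - x) +
      (L / 2) * ‖y - x‖ ^ 2)
    {Ω : Type*} [MeasurableSpace Ω] (μ : Measure Ω) [IsProbabilityMeasure μ]
    (w0 : E) (W e : ℕ → Ω → E)
    (hW0 : W 0 = fun _ => w0)
    (hWrec : ∀ t : ℕ, W (t + 1) =
      fun ω => W t ω - (γ / Real.sqrt (t + 1)) • (gradient f (W t ω) + e t ω))
    (hunbiased : ∀ t, ∫ ω, (inner ℝ (gradient f (W t ω)) (e t ω) : ℝ) ∂μ = 0)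
    (hmse : ∀ t, ∫ ω, ‖e t ω‖ ^ 2 ∂μ ≤ σsq)
    (hint1 : ∀ t, Integrable (fun ω => f (W t ω)) μ)
    (hint2 : ∀ t, Integrable (fun ω => ‖gradient f (W t ω)‖ ^ 2) μ)
    (hint3 : ∀ t, Integrable (fun ω => ‖e t ω‖ ^ 2) μ)
    (hint4 : ∀ t, Integrable (fun ω => (inner ℝ (gradient f (W t ω)) (e t ω) : ℝ)) μ) :
    (∀ T : ℕ, 1 ≤ T →
      (1 / (T : ℝ)) * ∑ t ∈ range T, ∫ ω, ‖gradient f (W t ω)‖ ^ 2 ∂μ ≤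
        (1 / Real.sqrt T) * ((f w0 - fstar) / (γ * (1 - γ * L / 2)) +
          σsq * (1 + Real.log T) * (γ * L / 2) / (1 - γ * L / 2))) ∧
    Tendsto (fun T : ℕ =>
        (1 / (T : ℝ)) * ∑ t ∈ range T, ∫ ω, ‖gradient f (W t ω)‖ ^ 2 ∂μ)
      atTop (𝓝 0) :=
  stmt_15_general L γ σsq fstar hL hγ hγL hσsq f hlb hsmooth μ w0 W e hW0 hWrec hunbiased hmse hint1
    hint2 hint3 hint4
end
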